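/- Let R be an expansive integer ν×ν matrix, B, L ⊂ ℝ^ν finite with 0 ∈ B ∩ L, #B = #L = N, L ⊂ ℤ^ν, R(B) ⊂ ℤ^ν, and suppose the N×N matrix H = N^{-1/2}(e^{2πi b·l})_{b∈B, l∈L} is unitary. Let μ be the self-affine measure satisfying μ = N^{-1} Σ_{b∈B} μ∘σ_b^{-1} with σ_b(x) = R^{-1}x + b, and let P = { l₀ + R*l₁ + R*²l₂ + ⋯ : lᵢ ∈ L, finite sums }. Then the exponentials {e_λ : λ ∈ P} are mutually orthogonal in L²(μ). -/

import Mathlib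

/-!
The Fourier transform `μ̂ t = ∫ e(t · x) dμ` satisfies `μ̂ t = χ_B(t) μ̂(R*⁻¹ t)`. After padding
with the digit `0 ∈ L`, two points of `P` have the same number of digits, and their difference
is `d₀ + R* s` with `d₀ = l'₀ - l₀` and `s` integral. As `R(B)` is integral,
`χ_B(d₀ + R* s) = χ_B(d₀)`, which vanishes by unitarity of `H` when `l₀ ≠ l'₀`; when `l₀ = l'₀`
the refinement equation reduces `μ̂(R* s)` to a multiple of `μ̂ s`, and induction on the number
of digits concludes.
-/

open MeasureTheory

/-- The spectrum candidate `P(L) = { l₀ + R*l₁ + R*²l₂ + ⋯ : lᵢ ∈ L, finite sums }`,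
where `R*` is the transpose of `R`. -/
def PsetL {ν : ℕ} (Rt : Matrix (Fin ν) (Fin ν) ℝ) (L : Finset (Fin ν → ℝ)) :
    Set (Fin ν → ℝ) :=
  {lam | ∃ (n : ℕ) (l : ℕ → (Fin ν → ℝ)), (∀ i, l i ∈ L) ∧
    lam = ∑ i ∈ Finset.range n, (Rt ^ i).mulVec (l i)}

open Matrix Real FourierTransform

theorem Matrix.det_ne_zero_of_not_isRoot_charpoly_zero {n K : Type*} [Fintype n] [DecidableEq n]
    [Field K] {A : Matrix n n K} (h : ¬ A.charpoly.IsRoot 0) : A.det ≠ 0 := by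
  rw [det_eq_sign_charpoly_coeff, Polynomial.coeff_zero_eq_eval_zero]
  simpa using h

theorem Real.fourierChar_intCast (k : ℤ) : 𝐞 (k : ℝ) = 1 := by
  rw [fourierChar_apply', mul_comm, Circle.exp_intCast_mul]
  simp

def intVectors (ι : Type*) : AddSubgroup (ι → ℝ) :=
  AddSubgroup.pi Set.univ fun _ => (Int.castRingHom ℝ).range.toAddSubgroup

section

variable {ι : Type*}

theorem mem_intVectors {v : ι → ℝ} : v ∈ intVectors ι ↔ ∀ i, ∃ k : ℤ, v i = k := by
  simp [intVectors, AddSubgroup.mem_pi, eq_comm]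

variable [Fintype ι]

theorem fourierChar_dotProduct_eq_one {v w : ι → ℝ} (hv : v ∈ intVectors ι)
    (hw : w ∈ intVectors ι) : 𝐞 (v ⬝ᵥ w) = 1 := by
  obtain ⟨k, hk⟩ : v ⬝ᵥ w ∈ (Int.castRingHom ℝ).range :=
    Subring.sum_mem _ fun i _ => mul_mem (hv i trivial) (hw i trivial)
  rw [← hk]
  exact fourierChar_intCast k

theorem intCast_mulVec_mem_intVectors (A : Matrix ι ι ℤ) {v : ι → ℝ} (hv : v ∈ intVectors ι) :
    A.map ((↑) : ℤ → ℝ) *ᵥ v ∈ intVectors ι := fun i _ =>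
  Subring.sum_mem _ fun j _ => mul_mem ⟨A i j, rfl⟩ (hv j trivial)

noncomputable def fourierStieltjes (μ : Measure (ι → ℝ)) (t : ι → ℝ) : ℂ :=
  ∫ x, (𝐞 (t ⬝ᵥ x) : ℂ) ∂μ

theorem continuous_fourierChar_dotProduct (t : ι → ℝ) :
    Continuous fun x : ι → ℝ => (𝐞 (t ⬝ᵥ x) : ℂ) :=
  continuous_subtype_val.comp <|
    continuous_fourierChar.comp (continuous_const.dotProduct continuous_id)

theorem fourierStieltjes_map_affine (μ : Measure (ι → ℝ)) (A : Matrix ι ι ℝ) (b t : ι → ℝ) :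
    fourierStieltjes (μ.map fun x => A *ᵥ x + b) t =
      𝐞 (t ⬝ᵥ b) * fourierStieltjes μ (Aᵀ *ᵥ t) := by
  have hmeas : Measurable fun x : ι → ℝ => A *ᵥ x + b := by fun_prop
  rw [fourierStieltjes, fourierStieltjes, integral_map hmeas.aemeasurable
    (continuous_fourierChar_dotProduct t).aestronglyMeasurable, ← integral_const_mul]
  congr 1 with x
  rw [dotProduct_add, mulVec_transpose, dotProduct_mulVec, add_comm, AddChar.map_add_eq_mul,
    Circle.coe_mul]

theorem fourierStieltjes_eq_of_eq_smul_sum_map {μ : Measure (ι → ℝ)} [IsFiniteMeasure μ]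
    {A : Matrix ι ι ℝ} {B : Finset (ι → ℝ)} {c : ENNReal}
    (hμ : μ = c • ∑ b ∈ B, μ.map fun x => A *ᵥ x + b) (t : ι → ℝ) :
    fourierStieltjes μ t =
      c.toReal * (∑ b ∈ B, (𝐞 (t ⬝ᵥ b) : ℂ)) * fourierStieltjes μ (Aᵀ *ᵥ t) := by
  have hint (b : ι → ℝ) :
      Integrable (fun x => (𝐞 (t ⬝ᵥ x) : ℂ)) (μ.map fun x => A *ᵥ x + b) :=
    Integrable.of_bound (continuous_fourierChar_dotProduct t).aestronglyMeasurable 1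
      (ae_of_all _ fun x => (Circle.norm_coe _).le)
  calc fourierStieltjes μ t
      = c.toReal • ∑ b ∈ B, fourierStieltjes (μ.map fun x => A *ᵥ x + b) t := by
        conv_lhs => rw [fourierStieltjes, hμ]
        rw [integral_smul_measure, integral_finsetSum_measure fun b _ => hint b]
        rfl
    _ = _ := by
        simp only [fourierStieltjes_map_affine, Finset.sum_mul, Complex.real_smul, mul_assoc]

variable [DecidableEq ι]

theorem pow_intCast_mulVec_mem_intVectors (A : Matrix ι ι ℤ) {v : ι → ℝ}
    (hv : v ∈ intVectors ι) (i : ℕ) : (A.map ((↑) : ℤ → ℝ)) ^ i *ᵥ v ∈ intVectors ι := by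
  induction i with
  | zero => simpa using hv
  | succ i ih => simpa only [pow_succ', ← mulVec_mulVec] using intCast_mulVec_mem_intVectors A ih

theorem sum_range_succ_pow_mulVec {α : Type*} [Semiring α] (A : Matrix ι ι α) (d : ℕ → ι → α)
    (m : ℕ) :
    ∑ i ∈ Finset.range (m + 1), A ^ i *ᵥ d i =
      d 0 + A *ᵥ ∑ i ∈ Finset.range m, A ^ i *ᵥ d (i + 1) := by
  rw [Finset.sum_range_succ', pow_zero, one_mulVec, add_comm, mulVec_sum]
  simp only [mulVec_mulVec, ← pow_succ']

theorem fourierStieltjes_sum_pow_mulVec_sub_eq_zero (R : Matrix ι ι ℤ)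
    (hR : (R.map ((↑) : ℤ → ℝ)).det ≠ 0) {B L : Finset (ι → ℝ)}
    (hL : ∀ l ∈ L, l ∈ intVectors ι) (hRB : ∀ b ∈ B, R.map ((↑) : ℤ → ℝ) *ᵥ b ∈ intVectors ι)
    (hH : ∀ l ∈ L, ∀ l' ∈ L, l ≠ l' → ∑ b ∈ B, (𝐞 (b ⬝ᵥ (l - l')) : ℂ) = 0)
    {μ : Measure (ι → ℝ)} [IsFiniteMeasure μ] {c : ENNReal}
    (hμ : μ = c • ∑ b ∈ B, μ.map fun x => (R.map ((↑) : ℤ → ℝ))⁻¹ *ᵥ x + b)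
    (m : ℕ) {l l' : ℕ → ι → ℝ} (hl : ∀ i, l i ∈ L) (hl' : ∀ i, l' i ∈ L)
    (hne : ∑ i ∈ Finset.range m, (R.map ((↑) : ℤ → ℝ))ᵀ ^ i *ᵥ (l' i - l i) ≠ 0) :
    fourierStieltjes μ (∑ i ∈ Finset.range m, (R.map ((↑) : ℤ → ℝ))ᵀ ^ i *ᵥ (l' i - l i)) = 0 := by
  set M := R.map ((↑) : ℤ → ℝ)
  induction m generalizing l l' with
  | zero => simp at hne
  | succ m ih =>
    set s := ∑ i ∈ Finset.range m, Mᵀ ^ i *ᵥ (l' (i + 1) - l (i + 1))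
    have hs : s ∈ intVectors ι := AddSubgroup.sum_mem _ fun i _ => by
      simpa only [M, transpose_map] using
        pow_intCast_mulVec_mem_intVectors Rᵀ (sub_mem (hL _ (hl' _)) (hL _ (hl _))) i
    rw [sum_range_succ_pow_mulVec] at hne ⊢
    rw [fourierStieltjes_eq_of_eq_smul_sum_map hμ]
    have hχ : ∀ b ∈ B, (𝐞 ((l' 0 - l 0 + Mᵀ *ᵥ s) ⬝ᵥ b) : ℂ) = 𝐞 (b ⬝ᵥ (l' 0 - l 0)) := by
      intro b hb
      rw [add_dotProduct, mulVec_transpose, ← dotProduct_mulVec, AddChar.map_add_eq_mul,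
        fourierChar_dotProduct_eq_one hs (hRB b hb), mul_one, dotProduct_comm]
    by_cases h : l' 0 = l 0
    · rw [h, sub_self, zero_add] at hne ⊢
      have hinv : (M⁻¹)ᵀ *ᵥ (Mᵀ *ᵥ s) = s := by
        rw [mulVec_mulVec, ← transpose_mul, mul_nonsing_inv _ hR.isUnit, transpose_one,
          one_mulVec]
      rw [hinv, ih (fun i => hl (i + 1)) (fun i => hl' (i + 1)) fun hs0 => hne (by simp [hs0]),
        mul_zero]
    · rw [Finset.sum_congr rfl hχ, hH _ (hl' 0) _ (hl 0) h, mul_zero, zero_mul]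

end

theorem exists_eq_sum_range_of_mem_PsetL {ν : ℕ} {A : Matrix (Fin ν) (Fin ν) ℝ}
    {L : Finset (Fin ν → ℝ)} (h0 : 0 ∈ L) {lam : Fin ν → ℝ} (h : lam ∈ PsetL A L) :
    ∃ n, ∀ m, n ≤ m → ∃ l : ℕ → Fin ν → ℝ, (∀ i, l i ∈ L) ∧
      lam = ∑ i ∈ Finset.range m, A ^ i *ᵥ l i := by
  obtain ⟨n, l, hl, rfl⟩ := h
  refine ⟨n, fun m hm => ⟨fun i => if i < n then l i else 0, fun i => ?_, ?_⟩⟩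
  · dsimp only
    split_ifs
    exacts [hl i, h0]
  · rw [← Finset.sum_range_add_sum_Ico _ hm, Finset.sum_eq_zero (s := Finset.Ico n m), add_zero]
    · exact Finset.sum_congr rfl fun i hi => by simp only [if_pos (Finset.mem_range.1 hi)]
    · intro i hi
      simp only [if_neg (Finset.mem_Ico.1 hi).1.not_gt, mulVec_zero]

theorem exponentials_orthogonal_selfaffine {ν N : ℕ}
    (R : Matrix (Fin ν) (Fin ν) ℤ)
    (hexp : ∀ ξ : ℂ, ((R.map (fun n : ℤ => (n : ℂ))).charpoly).IsRoot ξ → 1 < ‖ξ‖)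
    (B L : Finset (Fin ν → ℝ))
    (h0L : (0 : Fin ν → ℝ) ∈ L)
    (hLint : ∀ l ∈ L, ∀ i, ∃ k : ℤ, l i = (k : ℝ))
    (hRBint : ∀ b ∈ B, ∀ i, ∃ k : ℤ, (R.map (fun n : ℤ => (n : ℝ))).mulVec b i = (k : ℝ))
    (hH : ∀ l ∈ L, ∀ l' ∈ L, l ≠ l' →
      ∑ b ∈ B,
        Complex.exp ((((2 : ℝ) * Real.pi * ∑ i, b i * (l i - l' i) : ℝ) : ℂ) * Complex.I) = 0)
    (μ : Measure (Fin ν → ℝ)) [IsProbabilityMeasure μ]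
    (hself : μ = (N : ENNReal)⁻¹ •
      ∑ b ∈ B, μ.map (fun x => (R.map (fun n : ℤ => (n : ℝ)))⁻¹.mulVec x + b)) :
    ∀ lam ∈ PsetL ((R.map (fun n : ℤ => (n : ℝ))).transpose) L,
      ∀ lam' ∈ PsetL ((R.map (fun n : ℤ => (n : ℝ))).transpose) L, lam ≠ lam' →
      ∫ x, Complex.exp
          ((((2 : ℝ) * Real.pi * ∑ i, (lam' i - lam i) * x i : ℝ) : ℂ) * Complex.I) ∂μ = 0 := by
  intro lam hlam lam' hlam' hne
  have hR : (R.map ((↑) : ℤ → ℝ)).det ≠ 0 := by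
    have hRℂ := det_ne_zero_of_not_isRoot_charpoly_zero fun h0 =>
      (hexp 0 h0).not_ge (by simp)
    rw [← Int.cast_det] at hRℂ ⊢
    exact_mod_cast hRℂ
  obtain ⟨n, hn⟩ := exists_eq_sum_range_of_mem_PsetL h0L hlam
  obtain ⟨n', hn'⟩ := exists_eq_sum_range_of_mem_PsetL h0L hlam'
  obtain ⟨l, hl, rfl⟩ := hn (max n n') (le_max_left n n')
  obtain ⟨l', hl', rfl⟩ := hn' (max n n') (le_max_right n n')
  have horth := fourierStieltjes_sum_pow_mulVec_sub_eq_zero R hR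
    (fun l hl => mem_intVectors.2 (hLint l hl)) (fun b hb => mem_intVectors.2 (hRBint b hb)) hH
    hself (max n n') hl hl'
  simp only [mulVec_sub, Finset.sum_sub_distrib] at horth
  exact horth (sub_ne_zero.2 hne.symm)
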